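/- arXiv:0707.3608 — 4 statements merged into one kernel-verified Lean document; each statement's English description precedes it below -/
import Mathlib

section
/- Let X be a uniform space and let A, B ⊆ X be two non-empty uniformly open subsets, each of which is chain connected as a subset (for every entourage E of X, any two points of A are joined by an E-chain all of whose points lie in A, and likewise for B). If A ∩ B ≠ ∅ then A = B. -/
/-- A list `x₀, …, xₙ` of points of `X` is an `E`-chain if each consecutive pair of
points `(xᵢ, xᵢ₊₁)` lies in `E`. -/
def IsEChain {X : Type*} (E : Set (X × X)) (l : List X) : Prop :=
  l.Chain' fun a b => (a, b) ∈ E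

/-- A subset `A` of a uniform space `X` is *chain connected as a subset* if for every
entourage `E` of `X`, every pair of points of `A` is joined by an `E`-chain all of whose
points lie in `A`. -/
def ChainConnectedIn {X : Type*} [UniformSpace X] (A : Set X) : Prop :=
  ∀ E ∈ uniformity X, ∀ x ∈ A, ∀ y ∈ A, ∃ l : List X,
    IsEChain E l ∧ l.head? = some x ∧ l.getLast? = some y ∧ ∀ z ∈ l, z ∈ A

/-- A subset `A` of a uniform space `X` is *uniformly open* if there is an entourage `E`
of `X` such that for every `a ∈ A` the ball `B(a,E) = {y | (a,y) ∈ E}` is contained in `A`. -/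
def UniformlyOpen {X : Type*} [UniformSpace X] (A : Set X) : Prop :=
  ∃ E ∈ uniformity X, ∀ a ∈ A, UniformSpace.ball a E ⊆ A

/-- Two non-empty, uniformly open, chain connected subsets of a uniform space with
non-empty intersection must be equal. -/
theorem uniformlyOpen_chainConnected_eq_of_inter_nonempty {X : Type*} [UniformSpace X]
    {A B : Set X} (hA : UniformlyOpen A) (hB : UniformlyOpen B)
    (hAc : ChainConnectedIn A) (hBc : ChainConnectedIn B)
    (hAne : A.Nonempty) (hBne : B.Nonempty) (hAB : (A ∩ B).Nonempty) :
    A = B := by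
  obtain ⟨EA, hEA, hEAball⟩ := hA
  obtain ⟨EB, hEB, hEBball⟩ := hB
  obtain ⟨c, hcA, hcB⟩ := hAB
  have hF : EA ∩ EB ∈ uniformity X := Filter.inter_mem hEA hEB
  have key : ∀ (S : Set X), (∀ z ∈ S, ∀ w, (z, w) ∈ EA ∩ EB → w ∈ S) →
      ∀ l : List X, IsEChain (EA ∩ EB) l → ∀ x, l.head? = some x → x ∈ S →
      ∀ y, l.getLast? = some y → y ∈ S := by
    intro S hS l
    induction l with
    | nil => intro _ x hx; simp at hx
    | cons a t ih =>
      intro hchain x hx hxS y hy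
      simp at hx; subst hx
      cases t with
      | nil => simp at hy; subst hy; exact hxS
      | cons b t' =>
        have hab : (a, b) ∈ EA ∩ EB := (List.isChain_cons_cons.mp hchain).1
        have hchain' : IsEChain (EA ∩ EB) (b :: t') := (List.isChain_cons_cons.mp hchain).2
        have hbS : b ∈ S := hS a hxS b hab
        have hy' : (b :: t').getLast? = some y := by
          rwa [List.getLast?_cons_cons] at hy
        exact ih hchain' b rfl hbS y hy'
  have stepB : ∀ z ∈ B, ∀ w, (z, w) ∈ EA ∩ EB → w ∈ B := fun z hz w hw =>
    hEBball z hz hw.2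
  have stepA : ∀ z ∈ A, ∀ w, (z, w) ∈ EA ∩ EB → w ∈ A := fun z hz w hw =>
    hEAball z hz hw.1
  ext x
  constructor
  · intro hx
    obtain ⟨l, hl, hh, hlast, _⟩ := hAc (EA ∩ EB) hF c hcA x hx
    exact key B stepB l hl c hh hcB x hlast
  · intro hx
    obtain ⟨l, hl, hh, hlast, _⟩ := hBc (EA ∩ EB) hF c hcB x hx
    exact key A stepA l hl c hh hcA x hlast
end

section
/- Let G be a group acting on a uniform space X such that for each g ∈ G the map x ↦ g•x is a uniform homeomorphism of X, and let f : X → Y be a uniformly continuous surjection onto a uniform space Y whose fibers are exactly the G-orbits (f(x) = f(y) if and only if g•x = y for some g ∈ G). Assume that the G-invariant entourages E of X (those satisfying (g•x, g•y) ∈ E ⟺ (x,y) ∈ E for all g ∈ G and all x, y) whose image (f×f)(E) is an entourage of Y form a basis of the uniformity of X. Then for every uniformly open subset A ⊆ X, the image f(A) is uniformly open in Y. -/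
/-- Let `G` act on a uniform space `X` by uniform homeomorphisms and let `f : X → Y` be a
uniformly continuous surjection whose fibers are exactly the `G`-orbits.  If the
`G`-invariant entourages of `X` whose image under `f × f` is an entourage of `Y` form a
basis of the uniformity of `X`, then the image under `f` of any uniformly open subset of
`X` is uniformly open in `Y`. -/
theorem uniformlyOpen_image_of_quotient {G X Y : Type*} [Group G]
    [UniformSpace X] [UniformSpace Y] [MulAction G X]
    (hact : ∀ g : G, UniformContinuous fun x : X => g • x)
    (f : X → Y) (hf : UniformContinuous f) (hsurj : Function.Surjective f)
    (hfib : ∀ x y : X, f x = f y ↔ ∃ g : G, g • x = y)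
    (hbasis : ∀ E ∈ uniformity X, ∃ F ∈ uniformity X, F ⊆ E ∧
      (∀ (g : G) (x y : X), (g • x, g • y) ∈ F ↔ (x, y) ∈ F) ∧
      Prod.map f f '' F ∈ uniformity Y)
    {A : Set X} (hA : UniformlyOpen A) :
    UniformlyOpen (f '' A) := by
  obtain ⟨E, hE, hEA⟩ := hA
  obtain ⟨F, hF, hFE, hinv, himg⟩ := hbasis E hE
  refine ⟨Prod.map f f '' F, himg, ?_⟩
  rintro b ⟨a, ha, rfl⟩ y hy
  obtain ⟨⟨x, z⟩, hxz, hxy⟩ := hy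
  simp only [Prod.map, Prod.mk.injEq] at hxy
  obtain ⟨hfx, hfz⟩ := hxy
  obtain ⟨g, hg⟩ := (hfib x a).mp hfx
  have : (a, g • z) ∈ F := by rw [← hg]; exact (hinv g x z).mpr hxz
  refine ⟨g • z, hEA a ha (hFE this), ?_⟩
  rw [← hfz]
  exact ((hfib z (g • z)).mpr ⟨g, rfl⟩).symm
end

section
/- Let X = [0,2] × ℤ₂, where [0,2] ⊆ ℝ has its usual metric, ℤ₂ = {0,1} has the discrete metric, and X has the product metric uniformity, and let Y = [0,2] with its usual metric uniformity. Define f : X → Y by f(q,0) = q and f(q,1) = q/2. Then: (i) f is a uniformly continuous surjection; (ii) for every entourage E of X, the image (f×f)(E) is an entourage of Y (f is bi-uniformly continuous); (iii) the set [0,2] × {1} is uniformly open in X; and (iv) its image f([0,2] × {1}) = [0,1] is not open in Y. -/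
/-- `ℤ₂ = {0,1}` with the discrete metric; its uniformity is the discrete (bottom)
uniformity. -/
instance : UniformSpace (Fin 2) := ⊥

/-- The map `f : [0,2] × ℤ₂ → [0,2]` given by `f(q,0) = q` and `f(q,1) = q/2`. -/
noncomputable def f82 (p : Set.Icc (0 : ℝ) 2 × Fin 2) : Set.Icc (0 : ℝ) 2 :=
  if p.2 = 0 then p.1
  else ⟨p.1.1 / 2, by
    obtain ⟨h0, h2⟩ := p.1.2
    constructor
    · positivity
    · linarith⟩

/-!
The second factor `ℤ₂` is uniformly discrete, so every set of the form `Y × {1}` is uniformly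
open, and since `q ↦ (q, 0)` is a uniformly continuous section of `f`, the image of an entourage
contains the corresponding entourage of `[0,2]`. Yet `f` squeezes the sheet `[0,2] × {1}` onto
`[0,1]`, which is closed, proper and nonempty in the connected space `[0,2]`, hence not open.
-/

open Filter Set Topology Uniformity

section UniformSpace

variable {α β γ : Type*} [UniformSpace α] [UniformSpace β] [UniformSpace γ]

theorem UniformlyOpen.preimage {f : α → β} (hf : UniformContinuous f) {A : Set β}
    (hA : UniformlyOpen A) : UniformlyOpen (f ⁻¹' A) := by
  obtain ⟨E, hE, hball⟩ := hA
  exact ⟨Prod.map f f ⁻¹' E, hf hE, fun a ha _ hy => hball (f a) ha hy⟩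

theorem uniformlyOpen_of_discreteUniformity [DiscreteUniformity α] (A : Set α) :
    UniformlyOpen A :=
  ⟨SetRel.id, DiscreteUniformity.relId_mem_uniformity α, fun _ ha _ hy => (hy : _ = _) ▸ ha⟩

theorem Function.RightInverse.prodMap_image_mem_uniformity {f : α → β} {s : β → α}
    (hfs : Function.RightInverse s f) (hs : UniformContinuous s) {E : Set (α × α)}
    (hE : E ∈ 𝓤 α) : Prod.map f f '' E ∈ 𝓤 β :=
  mem_of_superset (hs hE) fun p hp => ⟨Prod.map s s p, hp, Prod.ext (hfs p.1) (hfs p.2)⟩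

theorem uniformContinuous_prod_of_discreteUniformity [DiscreteUniformity β] [Finite β]
    {f : α × β → γ} (hf : ∀ b, UniformContinuous fun a => f (a, b)) : UniformContinuous f := by
  intro V hV
  obtain ⟨U, hU, hUV⟩ : ∃ U ∈ 𝓤 α, ∀ b, ∀ p ∈ U, (f (p.1, b), f (p.2, b)) ∈ V :=
    ⟨_, iInter_mem.2 fun b => hf b hV, fun b _ hp => mem_iInter.1 hp b⟩
  have hfst : {p : (α × β) × (α × β) | (p.1.1, p.2.1) ∈ U} ∈ 𝓤 (α × β) :=
    uniformContinuous_fst hU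
  have hsnd : {p : (α × β) × (α × β) | p.1.2 = p.2.2} ∈ 𝓤 (α × β) :=
    uniformContinuous_snd (DiscreteUniformity.relId_mem_uniformity β)
  refine mem_map.2 (mem_of_superset (inter_mem hfst hsnd) ?_)
  rintro ⟨⟨a, b⟩, ⟨a', b'⟩⟩ ⟨hU, rfl : b = b'⟩
  exact hUV b _ hU

end UniformSpace

theorem not_isOpen_setOf_mem_Icc {a b c : ℝ} (hac : a ≤ c) (hcb : c < b) :
    ¬ IsOpen {q : Icc a b | (q : ℝ) ∈ Icc a c} := by
  have := Subtype.preconnectedSpace (isPreconnected_Icc (a := a) (b := b))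
  intro hopen
  have hclosed : IsClosed {q : Icc a b | (q : ℝ) ∈ Icc a c} :=
    isClosed_Icc.preimage continuous_subtype_val
  rcases isClopen_iff.1 ⟨hclosed, hopen⟩ with hempty | huniv
  · exact (eq_empty_iff_forall_notMem.1 hempty) ⟨a, le_rfl, hac.trans hcb.le⟩ ⟨le_rfl, hac⟩
  · have hb : (⟨b, hac.trans hcb.le, le_rfl⟩ : Icc a b) ∈ {q : Icc a b | (q : ℝ) ∈ Icc a c} :=
      huniv ▸ mem_univ _
    exact hcb.not_ge hb.2

theorem f82_zero (q : Icc (0 : ℝ) 2) : f82 (q, 0) = q := rfl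

theorem coe_f82_one (q : Icc (0 : ℝ) 2) : (f82 (q, 1) : ℝ) = q / 2 := rfl

theorem f82_rightInverse : Function.RightInverse (fun q => (q, 0)) f82 := f82_zero

theorem uniformContinuous_f82 : UniformContinuous f82 := by
  refine uniformContinuous_prod_of_discreteUniformity fun i => ?_
  fin_cases i
  · exact uniformContinuous_id
  · rw [isUniformEmbedding_subtype_val.isUniformInducing.uniformContinuous_iff]
    exact uniformContinuous_subtype_val.div_const' 2

theorem f82_image_setOf_snd_eq_one :
    f82 '' {p | p.2 = 1} = {q : Icc (0 : ℝ) 2 | (q : ℝ) ∈ Icc 0 1} := by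
  ext q
  constructor
  · rintro ⟨⟨a, i⟩, rfl : i = 1, rfl⟩
    rw [mem_ofPred_eq, coe_f82_one]
    constructor <;> linarith [a.2.1, a.2.2]
  · rintro ⟨hq0, hq1⟩
    refine ⟨(⟨2 * q, by linarith, by linarith⟩, 1), rfl, Subtype.ext ?_⟩
    rw [coe_f82_one]
    ring

/-- For `X = [0,2] × ℤ₂` (product metric uniformity, `ℤ₂` discrete) and
`f : X → [0,2]` with `f(q,0) = q`, `f(q,1) = q/2`: `f` is a uniformly continuous
surjection, `f` is bi-uniformly continuous (images of entourages are entourages),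
`[0,2] × {1}` is uniformly open in `X`, yet its image `f([0,2] × {1}) = [0,1]` is
not open in `[0,2]`. -/
theorem biuniform_image_of_uniformlyOpen_not_open :
    (Function.Surjective f82 ∧ UniformContinuous f82) ∧
    (∀ E ∈ uniformity (Set.Icc (0 : ℝ) 2 × Fin 2),
      Prod.map f82 f82 '' E ∈ uniformity (Set.Icc (0 : ℝ) 2)) ∧
    UniformlyOpen {p : Set.Icc (0 : ℝ) 2 × Fin 2 | p.2 = 1} ∧
    (f82 '' {p : Set.Icc (0 : ℝ) 2 × Fin 2 | p.2 = 1} =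
        {q : Set.Icc (0 : ℝ) 2 | (q : ℝ) ∈ Set.Icc (0 : ℝ) 1} ∧
      ¬ IsOpen (f82 '' {p : Set.Icc (0 : ℝ) 2 × Fin 2 | p.2 = 1})) := by
  have hsection : UniformContinuous fun q : Icc (0 : ℝ) 2 => (q, (0 : Fin 2)) :=
    uniformContinuous_id.prodMk uniformContinuous_const
  refine ⟨⟨f82_rightInverse.surjective, uniformContinuous_f82⟩,
    fun E hE => f82_rightInverse.prodMap_image_mem_uniformity hsection hE,
    (uniformlyOpen_of_discreteUniformity {1}).preimage uniformContinuous_snd,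
    f82_image_setOf_snd_eq_one, ?_⟩
  rw [f82_image_setOf_snd_eq_one]
  exact not_isOpen_setOf_mem_Icc zero_le_one one_lt_two
end

section
/- Let X be a uniform space and E an entourage of X. Suppose x₀,…,x_k is an E-chain, y₀,…,y_m,x_k and y₀,…,y_m,y are E-chains, and (x_k, y) ∈ E. Then the concatenated E-chain x₀,…,x_k, y_m, y_{m-1},…,y₁, y₀, y₁,…,y_m, y (the first chain, followed by the reverse of the second, followed by the third) is E-homotopic with fixed endpoints to the E-chain x₀,…,x_k, y. -/
/-- A single move of an `E`-homotopy: insert one point into an `E`-chain (equivalently,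
read backwards, delete one point), in such a way that the result is still an `E`-chain
and the endpoints (the first and the last point) are unchanged. -/
def EChainStep {X : Type*} (E : Set (X × X)) (l l' : List X) : Prop :=
  (∃ l₁ x l₂, l = l₁ ++ l₂ ∧ l' = l₁ ++ x :: l₂) ∧
    IsEChain E l ∧ IsEChain E l' ∧ l.head? = l'.head? ∧ l.getLast? = l'.getLast?

/-- Two `E`-chains are `E`-homotopic (with fixed endpoints) if one can be obtained from
the other by a finite sequence of single-point insertions/deletions preserving the
endpoints; i.e. `EHomotopic E` is the equivalence relation generated by `EChainStep E`. -/
def EHomotopic {X : Type*} (E : Set (X × X)) : List X → List X → Prop :=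
  Relation.EqvGen (EChainStep E)

/-!
Points `x` of a backtracking segment `… p, x, q …` can be deleted as soon as `(p, q) ∈ E`.
Since `E` is reflexive, the innermost spike `y₁, y₀, y₁` collapses to `y₁`, and peeling off the
spikes `yᵢ₊₁, yᵢ, yᵢ₊₁` one after another leaves `x_k, y_m, y`; finally `y_m` is deleted using
`(x_k, y) ∈ E`.
-/

section

variable {X : Type*} {E : Set (X × X)}

theorem IsEChain.reverse (hsymm : ∀ x y : X, (x, y) ∈ E → (y, x) ∈ E) {l : List X}
    (h : IsEChain E l) : IsEChain E l.reverse :=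
  List.isChain_reverse.mpr (h.imp fun a b hab => hsymm a b hab)

theorem IsEChain.skip {l₁ l₂ : List X} {p x q : X} (hc : IsEChain E (l₁ ++ p :: x :: q :: l₂))
    (hpq : (p, q) ∈ E) : IsEChain E (l₁ ++ p :: q :: l₂) := by
  obtain ⟨h₁, h₂, h₁₂⟩ := List.isChain_append.mp hc
  exact List.isChain_append.mpr ⟨h₁, h₂.tail.tail.cons_cons hpq, h₁₂⟩

theorem eHomotopic_skip {l₁ l₂ : List X} {p x q : X} (hc : IsEChain E (l₁ ++ p :: x :: q :: l₂))
    (hpq : (p, q) ∈ E) : EHomotopic E (l₁ ++ p :: x :: q :: l₂) (l₁ ++ p :: q :: l₂) := by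
  refine .symm _ _ (.rel _ _ ⟨⟨l₁ ++ [p], x, q :: l₂, by simp, by simp⟩, hc.skip hpq, hc, ?_, ?_⟩)
  · cases l₁ <;> simp
  · simp [List.getLast?_append]

theorem IsEChain.remove_spike {l r : List X} {p q : X} (hc : IsEChain E (l ++ p :: q :: p :: r)) :
    IsEChain E (l ++ p :: r) := by
  have hl : IsEChain E (l ++ [p]) := List.IsChain.prefix hc ⟨q :: p :: r, by simp⟩
  have hr : IsEChain E ([p] ++ r) := List.IsChain.suffix hc ⟨l ++ [p, q], by simp⟩
  rw [show l ++ p :: r = l ++ [p] ++ r by simp]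
  exact hl.append_overlap hr (by simp)

theorem eHomotopic_remove_spike (hrefl : ∀ x : X, (x, x) ∈ E) {l r : List X} {p q : X}
    (hr : r ≠ []) (hc : IsEChain E (l ++ p :: q :: p :: r)) :
    EHomotopic E (l ++ p :: q :: p :: r) (l ++ p :: r) := by
  obtain ⟨s, r, rfl⟩ := List.exists_cons_of_ne_nil hr
  have hps : (p, s) ∈ E := (List.isChain_append.mp hc).2.1.tail.tail.rel
  exact .trans _ _ _ (eHomotopic_skip hc (hrefl p)) (eHomotopic_skip (hc.skip (hrefl p)) hps)

theorem eHomotopic_cancel_backtrack (hrefl : ∀ x : X, (x, x) ∈ E) {l r : List X} {u v : X}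
    (huv : (u, v) ∈ E) : ∀ (zs : List X) (p : X),
      IsEChain E (l ++ u :: zs.reverse ++ p :: zs ++ v :: r) →
      EHomotopic E (l ++ u :: zs.reverse ++ p :: zs ++ v :: r) (l ++ u :: v :: r)
  | [], p, hc => by simpa using eHomotopic_skip (by simpa using hc) huv
  | z :: zs, p, hc => by
    have hc' : IsEChain E ((l ++ u :: zs.reverse) ++ z :: p :: z :: (zs ++ v :: r)) := by
      simpa using hc
    have hspike := eHomotopic_remove_spike hrefl (by simp) hc'
    have ih := eHomotopic_cancel_backtrack hrefl huv zs z (by simpa using hc'.remove_spike)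
    simp only [List.append_assoc, List.cons_append, List.reverse_cons] at hspike ih ⊢
    exact .trans _ _ _ hspike ih

theorem IsEChain.append_reverse_append (hsymm : ∀ x y : X, (x, y) ∈ E → (y, x) ∈ E)
    {l zs r : List X} {x p : X} (hl : IsEChain E (l ++ [x])) (hzx : IsEChain E (p :: zs ++ [x]))
    (hzr : IsEChain E (p :: zs ++ r)) : IsEChain E (l ++ x :: zs.reverse ++ p :: zs ++ r) := by
  have hrev : IsEChain E ([x] ++ (zs.reverse ++ [p])) := by simpa using hzx.reverse hsymm
  have hlp : IsEChain E (l ++ x :: zs.reverse ++ [p]) := by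
    rw [show l ++ x :: zs.reverse ++ [p] = l ++ [x] ++ (zs.reverse ++ [p]) by simp]
    exact hl.append_overlap hrev (by simp)
  have hpr : IsEChain E ([p] ++ (zs ++ r)) := by simpa using hzr
  rw [show l ++ x :: zs.reverse ++ p :: zs ++ r = l ++ x :: zs.reverse ++ [p] ++ (zs ++ r) by simp]
  exact hlp.append_overlap hpr (by simp)

end

theorem concat_backtrack_homotopic_append_general {X : Type*} [UniformSpace X]
    {E : Set (X × X)} (hE : E ∈ uniformity X)
    (hsymm : ∀ x y : X, (x, y) ∈ E → (y, x) ∈ E)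
    (a ys : List X) (ha : a ≠ [])
    (hachain : IsEChain E a)
    (hγ : IsEChain E (ys ++ [a.getLast ha]))
    (y : X) (hω : IsEChain E (ys ++ [y]))
    (hxy : (a.getLast ha, y) ∈ E) :
    EHomotopic E (a ++ ys.reverse ++ ys.tail ++ [y]) (a ++ [y]) := by
  rcases ys with _ | ⟨y₀, ys⟩
  · simp only [List.reverse_nil, List.tail_nil, List.append_nil]
    exact .refl _
  obtain ⟨a', x, rfl⟩ : ∃ a' x, a = a' ++ [x] := ⟨_, _, (List.dropLast_append_getLast ha).symm⟩
  simp only [List.getLast_append_singleton] at hγ hxy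
  have hc := hachain.append_reverse_append hsymm hγ hω
  simpa using eHomotopic_cancel_backtrack (fun _ => refl_mem_uniformity hE) (l := a') (r := [])
    hxy ys y₀ (by simpa using hc)

/-- Let `a = x₀, …, x_k` be an `E`-chain, let `ys = y₀, …, y_m` be such that
`y₀, …, y_m, x_k` and `y₀, …, y_m, y` are `E`-chains, and suppose `(x_k, y) ∈ E`.
Then the concatenated chain `x₀, …, x_k, y_m, …, y₁, y₀, y₁, …, y_m, y`
is `E`-homotopic with fixed endpoints to the chain `x₀, …, x_k, y`. -/
theorem concat_backtrack_homotopic_append {X : Type*} [UniformSpace X]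
    {E : Set (X × X)} (hE : E ∈ uniformity X)
    (hsymm : ∀ x y : X, (x, y) ∈ E → (y, x) ∈ E)
    (a ys : List X) (ha : a ≠ []) (hys : ys ≠ [])
    (hachain : IsEChain E a)
    (hγ : IsEChain E (ys ++ [a.getLast ha]))
    (y : X) (hω : IsEChain E (ys ++ [y]))
    (hxy : (a.getLast ha, y) ∈ E) :
    EHomotopic E (a ++ ys.reverse ++ ys.tail ++ [y]) (a ++ [y]) :=
  concat_backtrack_homotopic_append_general hE hsymm a ys ha hachain hγ y hω hxy
end
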